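/- Let L₁,L₂ > 0, α > 0, T > 0, and f ∈ B₀ (Wiener algebra on the torus). Then e^{−t(Δ²+Δ)}f ∈ 𝓑_{α,T}, i.e. Σ_{k∈ℤ²} sup_{t∈[0,T]} e^{αt|k| − tσ(k)} |f̂(k)| < ∞. -/
import Mathlib


noncomputable section
open scoped Real

/-- Euclidean norm of a lattice point `k ∈ ℤ²`. -/
def knorm (k : ℤ × ℤ) : ℝ := Real.sqrt ((k.1 : ℝ)^2 + (k.2 : ℝ)^2)

/-- The Fourier symbol of `Δ² + Δ` on the torus `[0,L₁]×[0,L₂]`. -/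
def sym (L1 L2 : ℝ) (k : ℤ × ℤ) : ℝ :=
  16 * π^4 * (k.1 : ℝ)^4 / L1^4 + 16 * π^4 * (k.1 : ℝ)^2 * (k.2 : ℝ)^2 / (L1^2 * L2^2)
    + 16 * π^4 * (k.2 : ℝ)^4 / L2^4 - 4 * π^2 * (k.1 : ℝ)^2 / L1^2 - 4 * π^2 * (k.2 : ℝ)^2 / L2^2

/-- For any periods `L₁, L₂ > 0`, any `α > 0`, `T > 0`, and any `f` in the Wiener
algebra `B₀` (summable Fourier coefficients), the function `e^{−t(Δ²+Δ)}f` belongs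
to `𝓑_{α,T}`, i.e. `Σ_k sup_{t∈[0,T]} e^{αt|k| − tσ(k)} |f̂(k)| < ∞`. -/
theorem semigroup_wiener_to_BalphaT (L1 L2 α T : ℝ)
    (hL1 : 0 < L1) (hL2 : 0 < L2) (hα : 0 < α) (hT : 0 < T)
    (f : ℤ × ℤ → ℂ) (hf : Summable fun k => ‖f k‖) :
    Summable fun k : ℤ × ℤ =>
      ⨆ t : Set.Icc (0:ℝ) T,
        Real.exp (α * (t : ℝ) * knorm k - (t : ℝ) * sym L1 L2 k) * ‖f k‖ := by
  have hπ := Real.pi_pos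
  have hne : Nonempty (Set.Icc (0:ℝ) T) := ⟨⟨0, le_refl 0, le_of_lt hT⟩⟩
  set A1 : ℝ := 16 * π^4 / L1^4 with hA1
  set A2 : ℝ := 16 * π^4 / L2^4 with hA2
  set B1 : ℝ := 4 * π^2 / L1^2 with hB1
  set B2 : ℝ := 4 * π^2 / L2^2 with hB2
  have hA1p : 0 < A1 := by rw [hA1]; positivity
  have hA2p : 0 < A2 := by rw [hA2]; positivity
  set M0 : ℝ := α + (α + B1)^2 / (4*A1) + (α + B2)^2 / (4*A2) with hM0
  set M : ℝ := max 0 M0 with hM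
  have hMnn : 0 ≤ M := le_max_left _ _
  have hxle : ∀ k : ℤ × ℤ, α * knorm k - sym L1 L2 k ≤ M0 := by
    intro k
    have hk : knorm k ≤ 1 + (((k.1:ℝ))^2 + ((k.2:ℝ))^2) := by
      have h1 : ((k.1:ℝ))^2 + ((k.2:ℝ))^2 ≤ (1 + (((k.1:ℝ))^2 + ((k.2:ℝ))^2))^2 := by
        nlinarith [sq_nonneg ((k.1:ℝ)), sq_nonneg ((k.2:ℝ)),
          sq_nonneg (((k.1:ℝ))^2 + ((k.2:ℝ))^2)]
      have h2 := Real.sqrt_le_sqrt h1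
      rwa [Real.sqrt_sq (by positivity)] at h2
    have hmid : 0 ≤ 16 * π^4 * ((k.1:ℝ))^2 * ((k.2:ℝ))^2 / (L1^2 * L2^2) := by positivity
    have key : sym L1 L2 k = A1 * ((k.1:ℝ))^4
        + 16 * π^4 * ((k.1:ℝ))^2 * ((k.2:ℝ))^2 / (L1^2 * L2^2)
        + A2 * ((k.2:ℝ))^4 - B1 * ((k.1:ℝ))^2 - B2 * ((k.2:ℝ))^2 := by
      unfold sym
      rw [hA1, hA2, hB1, hB2]
      ring
    have hq1 : (α + B1) * ((k.1:ℝ))^2 - A1 * ((k.1:ℝ))^4 ≤ (α + B1)^2 / (4*A1) := by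
      rw [le_div_iff₀ (by positivity)]
      nlinarith [sq_nonneg (2*A1*((k.1:ℝ))^2 - (α + B1))]
    have hq2 : (α + B2) * ((k.2:ℝ))^2 - A2 * ((k.2:ℝ))^4 ≤ (α + B2)^2 / (4*A2) := by
      rw [le_div_iff₀ (by positivity)]
      nlinarith [sq_nonneg (2*A2*((k.2:ℝ))^2 - (α + B2))]
    have hαk : α * knorm k ≤ α * (1 + (((k.1:ℝ))^2 + ((k.2:ℝ))^2)) :=
      mul_le_mul_of_nonneg_left hk hα.le
    rw [hM0]
    linarith [hαk, key, hmid, hq1, hq2]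
  have hC : ∀ k : ℤ × ℤ, ∀ t : Set.Icc (0:ℝ) T,
      Real.exp (α * (t:ℝ) * knorm k - (t:ℝ) * sym L1 L2 k) ≤ Real.exp (T * M) := by
    intro k t
    apply Real.exp_le_exp.mpr
    have ht0 : 0 ≤ (t:ℝ) := t.2.1
    have htT : (t:ℝ) ≤ T := t.2.2
    have hx := hxle k
    have hrw : α * (t:ℝ) * knorm k - (t:ℝ) * sym L1 L2 k
        = (t:ℝ) * (α * knorm k - sym L1 L2 k) := by ring
    rw [hrw]
    rcases le_or_gt (α * knorm k - sym L1 L2 k) 0 with h | h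
    · have h1 : (t:ℝ) * (α * knorm k - sym L1 L2 k) ≤ 0 :=
        mul_nonpos_of_nonneg_of_nonpos ht0 h
      have h2 : 0 ≤ T * M := mul_nonneg hT.le hMnn
      linarith
    · have h1 : (t:ℝ) * (α * knorm k - sym L1 L2 k) ≤ T * (α * knorm k - sym L1 L2 k) :=
        mul_le_mul_of_nonneg_right htT h.le
      have h2 : α * knorm k - sym L1 L2 k ≤ M := le_trans hx (le_max_right _ _)
      nlinarith
  refine Summable.of_nonneg_of_le (fun k => ?_) (fun k => ?_)
    (hf.mul_left (Real.exp (T*M)))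
  · exact Real.iSup_nonneg fun t => mul_nonneg (Real.exp_pos _).le (norm_nonneg _)
  · exact ciSup_le fun t => mul_le_mul_of_nonneg_right (hC k t) (norm_nonneg _)
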